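/- Let M({G}) be the space of symmetric p×p matrices m(a,b) with diagonal (a₁,...,a_p), off-diagonal entry b on every edge of a fixed tree T = (V,E) on p vertices, and zero elsewhere. Let P_G = M({G}) ∩ {positive definite}. Then the dual cone P_G* equals {m(a',b') : a'_i > 0 for all i, and |b'| < (1/(p-1)) Σ_{(i,j)∈E} √(a'_i a'_j)}. -/

import Mathlib

/-
The pairing is `tr (m(a, b) m(a', b')) = ∑ aᵢ a'ᵢ + 2 (p - 1) b b'`, and the closure of `P_G` is the
cone of positive semidefinite `m(a, b)`. If `m(a, b) ⪰ 0`, evaluating its quadratic form at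
`xᵢ = σᵢ √a'ᵢ`, with `σ` constant or alternating along a 2-colouring of the tree, gives
`|b| ∑_{i ~ j} √(a'ᵢ a'ⱼ) ≤ ∑ aᵢ a'ᵢ`, so the pairing is positive under the stated bound on `|b'|`.
Conversely, pairing with the diagonal units forces `a' > 0`, and pairing with the matrix with
diagonal `dᵢ = ∑_{j ~ i} √(a'ⱼ / a'ᵢ)` and off-diagonal `-sign b'` forces the bound; that matrix is
positive semidefinite, being a sum over the edges of singular `2 × 2` blocks
`[[√(a'ⱼ / a'ᵢ), ∓1], [∓1, √(a'ᵢ / a'ⱼ)]]`.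
-/

open Matrix

/-- The matrix `m(a,b)` for a coloured tree: diagonal `a`, common off-diagonal
value `b` on the edges of `G`, zero elsewhere. -/
def treeMat {p : ℕ} (G : SimpleGraph (Fin p)) [DecidableRel G.Adj]
    (a : Fin p → ℝ) (b : ℝ) : Matrix (Fin p) (Fin p) ℝ :=
  Matrix.of fun i j => if i = j then a i else if G.Adj i j then b else 0

open Finset SimpleGraph

lemma isClosed_setOf_posSemidef {n : Type*} [Fintype n] :
    IsClosed {M : Matrix n n ℝ | M.PosSemidef} := by
  simp only [posSemidef_iff_dotProduct_mulVec, IsHermitian, Set.ofPred_and, Set.ofPred_forall]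
  exact (isClosed_eq continuous_id.matrix_conjTranspose continuous_id).inter
    (isClosed_iInter fun x => isClosed_le continuous_const
      (continuous_const.dotProduct (continuous_id.matrix_mulVec continuous_const)))

lemma sq_add_sq_add_two_mul_mul_nonneg {ε : ℝ} (hε : |ε| ≤ 1) (x y : ℝ) :
    0 ≤ x ^ 2 + y ^ 2 + 2 * ε * x * y := by
  obtain ⟨h₁, h₂⟩ := abs_le.mp hε
  nlinarith [mul_nonneg (sub_nonneg.mpr h₂) (sq_nonneg (x - y)),
    mul_nonneg (neg_le_iff_add_nonneg.mp h₁) (sq_nonneg (x + y))]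

lemma sum_adj_nonneg {V : Type*} [Fintype V] (G : SimpleGraph V) [DecidableRel G.Adj]
    {f : V → V → ℝ} (hf : ∀ i j, G.Adj i j → 0 ≤ f i j + f j i) :
    0 ≤ ∑ i, ∑ j, if G.Adj i j then f i j else 0 := by
  have hswap : ∑ i, ∑ j, (if G.Adj i j then f i j else 0)
      = ∑ i, ∑ j, if G.Adj i j then f j i else 0 := by
    rw [sum_comm]
    simp only [G.adj_comm]
  have hsymm : 0 ≤ ∑ i, ∑ j, if G.Adj i j then f i j + f j i else 0 :=
    sum_nonneg fun i _ => sum_nonneg fun j _ => by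
      split_ifs with h
      exacts [hf i j h, le_rfl]
  simp only [ite_add_zero, sum_add_distrib, ← hswap] at hsymm
  linarith

lemma trace_diagonal_mul_adjMatrix {V R : Type*} [Fintype V] [DecidableEq V] [NonAssocSemiring R]
    (G : SimpleGraph V) [DecidableRel G.Adj] (a : V → R) :
    (diagonal a * G.adjMatrix R).trace = 0 := by
  simp [trace, diagonal_mul, -mul_adjMatrix_apply]

lemma SimpleGraph.Colorable.exists_sign_eq_neg_one {V : Type*} {G : SimpleGraph V}
    (hG : G.Colorable 2) :
    ∃ σ : V → ℝ, (∀ i, σ i ^ 2 = 1) ∧ ∀ i j, G.Adj i j → σ i * σ j = -1 := by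
  obtain ⟨c⟩ := hG
  refine ⟨fun i => if c i = 0 then 1 else -1, fun i => by dsimp only; split_ifs <;> norm_num,
    fun i j h => ?_⟩
  have := c.valid h
  dsimp only
  split_ifs <;> grind

section TreeMat

variable {p : ℕ} (G : SimpleGraph (Fin p)) [DecidableRel G.Adj]

lemma treeMat_eq (a : Fin p → ℝ) (b : ℝ) : treeMat G a b = diagonal a + b • G.adjMatrix ℝ := by
  ext i j
  rcases eq_or_ne i j with rfl | h
  · simp [treeMat]
  · by_cases hij : G.Adj i j <;> simp [treeMat, h, hij]

lemma treeMat_isHermitian (a : Fin p → ℝ) (b : ℝ) : (treeMat G a b).IsHermitian := by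
  rw [treeMat_eq]
  exact (isHermitian_diagonal a).add ((G.isSymm_adjMatrix).smul b)

lemma trace_treeMat_mul_treeMat (a a' : Fin p → ℝ) (b b' : ℝ) :
    (treeMat G a b * treeMat G a' b').trace = ∑ i, a i * a' i + 2 * #G.edgeFinset * (b * b') := by
  have hA : (G.adjMatrix ℝ * G.adjMatrix ℝ).trace = 2 * #G.edgeFinset := by
    simp only [trace, diag_apply, adjMatrix_mul_self_apply_self]
    exact_mod_cast G.sum_degrees_eq_twice_card_edges
  simp only [treeMat_eq, add_mul, mul_add, trace_add, Matrix.mul_smul, Matrix.smul_mul, trace_smul,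
    hA, diagonal_mul_diagonal, trace_diagonal, trace_mul_comm (G.adjMatrix ℝ),
    trace_diagonal_mul_adjMatrix, smul_eq_mul]
  ring

lemma dotProduct_treeMat_mulVec (a : Fin p → ℝ) (b : ℝ) (x : Fin p → ℝ) :
    x ⬝ᵥ treeMat G a b *ᵥ x
      = ∑ i, a i * x i ^ 2 + b * ∑ i, ∑ j, if G.Adj i j then x i * x j else 0 := by
  rw [treeMat_eq, add_mulVec, dotProduct_add, smul_mulVec, dotProduct_smul,
    dotProduct_mulVec_adjMatrix, smul_eq_mul]
  simp only [dotProduct, mulVec_diagonal]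
  exact congrArg₂ _ (sum_congr rfl fun i _ => by ring) rfl

lemma isClosed_setOf_exists_treeMat :
    IsClosed {K : Matrix (Fin p) (Fin p) ℝ | ∃ a b, K = treeMat G a b} := by
  let f : ((Fin p → ℝ) × ℝ) →ₗ[ℝ] Matrix (Fin p) (Fin p) ℝ :=
    diagonalLinearMap (Fin p) ℝ ℝ ∘ₗ LinearMap.fst ℝ _ _ +
      (LinearMap.snd ℝ _ _).smulRight (G.adjMatrix ℝ)
  have hf : {K | ∃ a b, K = treeMat G a b} = LinearMap.range f := by
    ext K
    simp [f, treeMat_eq, eq_comm]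
  rw [hf]
  exact (LinearMap.range f).closed_of_finiteDimensional

lemma closure_setOf_treeMat_posDef :
    closure {K : Matrix (Fin p) (Fin p) ℝ | (∃ a b, K = treeMat G a b) ∧ K.PosDef}
      = {K | (∃ a b, K = treeMat G a b) ∧ K.PosSemidef} := by
  refine subset_antisymm (closure_minimal (fun K hK => ⟨hK.1, hK.2.posSemidef⟩)
    ((isClosed_setOf_exists_treeMat G).inter isClosed_setOf_posSemidef)) ?_
  rintro _ ⟨⟨a, b, rfl⟩, hK⟩
  have hshift : ∀ t : ℝ, treeMat G (fun i => a i + t) b = treeMat G a b + t • 1 := fun t => by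
    rw [treeMat_eq, treeMat_eq, ← diagonal_add, smul_one_eq_diagonal]
    abel
  have hlim : Filter.Tendsto (fun t : ℝ => treeMat G a b + t • 1) (nhdsWithin 0 (Set.Ioi 0))
      (nhds (treeMat G a b)) := by
    have hc : Continuous fun t : ℝ => treeMat G a b + t • (1 : Matrix (Fin p) (Fin p) ℝ) := by
      fun_prop
    exact tendsto_nhdsWithin_of_tendsto_nhds (hc.tendsto' 0 _ (by simp))
  refine mem_closure_of_tendsto hlim (eventually_nhdsWithin_of_forall fun t ht => ?_)
  exact ⟨⟨_, b, (hshift t).symm⟩, PosDef.posSemidef_add hK (PosDef.one.smul ht)⟩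

noncomputable def dualWitness (r : Fin p → ℝ) (ε : ℝ) : Matrix (Fin p) (Fin p) ℝ :=
  treeMat G (fun i => ∑ j, if G.Adj i j then r j / r i else 0) ε

lemma posSemidef_dualWitness {r : Fin p → ℝ} (hr : ∀ i, 0 < r i) {ε : ℝ} (hε : |ε| ≤ 1) :
    (dualWitness G r ε).PosSemidef := by
  refine PosSemidef.of_dotProduct_mulVec_nonneg (treeMat_isHermitian G _ _) fun x => ?_
  rw [star_trivial, dualWitness, dotProduct_treeMat_mulVec]
  simp only [sum_mul, mul_sum, ← sum_add_distrib, ite_mul, zero_mul, mul_ite, mul_zero,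
    ← ite_add_zero]
  refine sum_adj_nonneg G fun i j _ => ?_
  have key : r j / r i * x i ^ 2 + ε * (x i * x j) + (r i / r j * x j ^ 2 + ε * (x j * x i))
      = ((r j * x i) ^ 2 + (r i * x j) ^ 2 + 2 * ε * (r j * x i) * (r i * x j)) / (r i * r j) := by
    have := (hr i).ne'
    have := (hr j).ne'
    field_simp
    ring
  rw [key]
  exact div_nonneg (sq_add_sq_add_two_mul_mul_nonneg hε _ _) (mul_pos (hr i) (hr j)).le

noncomputable def sqrtEdgeSum (a : Fin p → ℝ) : ℝ :=
  ∑ i, ∑ j, if G.Adj i j then √(a i * a j) else 0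

lemma trace_dualWitness_mul_treeMat {a : Fin p → ℝ} (ha : ∀ i, 0 < a i) (ε b : ℝ) :
    (dualWitness G (fun i => √(a i)) ε * treeMat G a b).trace
      = sqrtEdgeSum G a + 2 * #G.edgeFinset * (ε * b) := by
  rw [dualWitness, trace_treeMat_mul_treeMat, sqrtEdgeSum]
  congr 1
  refine sum_congr rfl fun i _ => ?_
  rw [sum_mul]
  refine sum_congr rfl fun j _ => ?_
  split_ifs
  · rw [Real.sqrt_mul (ha i).le, div_mul_eq_mul_div, mul_div_assoc, Real.div_sqrt, mul_comm]
  · rw [zero_mul]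

lemma sum_mul_add_mul_sqrtEdgeSum_nonneg {a a' : Fin p → ℝ} {b : ℝ}
    (hK : (treeMat G a b).PosSemidef) (ha' : ∀ i, 0 ≤ a' i)
    {σ : Fin p → ℝ} (hσ : ∀ i, σ i ^ 2 = 1) {ε : ℝ} (hσε : ∀ i j, G.Adj i j → σ i * σ j = ε) :
    0 ≤ ∑ i, a i * a' i + ε * b * sqrtEdgeSum G a' := by
  have hx := hK.dotProduct_mulVec_nonneg fun i : Fin p => σ i * √(a' i)
  have hdiag : ∑ i, a i * (σ i * √(a' i)) ^ 2 = ∑ i, a i * a' i :=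
    sum_congr rfl fun i _ => by rw [mul_pow, hσ, one_mul, Real.sq_sqrt (ha' i)]
  have hedges : (∑ i, ∑ j, if G.Adj i j then σ i * √(a' i) * (σ j * √(a' j)) else 0)
      = ε * sqrtEdgeSum G a' := by
    rw [sqrtEdgeSum, mul_sum]
    refine sum_congr rfl fun i _ => ?_
    rw [mul_sum]
    refine sum_congr rfl fun j _ => ?_
    split_ifs with h
    · rw [Real.sqrt_mul (ha' i), ← hσε i j h]
      ring
    · rw [mul_zero]
  rw [star_trivial, dotProduct_treeMat_mulVec, hdiag, hedges] at hx
  linarith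

end TreeMat

section DualCone

variable {p : ℕ} {G : SimpleGraph (Fin p)} [DecidableRel G.Adj] {a' : Fin p → ℝ} {b' : ℝ}

lemma abs_mul_sqrtEdgeSum_le (hG : G.Colorable 2) {a : Fin p → ℝ} {b : ℝ}
    (hK : (treeMat G a b).PosSemidef) (ha' : ∀ i, 0 ≤ a' i) :
    |b| * sqrtEdgeSum G a' ≤ ∑ i, a i * a' i := by
  obtain ⟨σ, hσ, hσadj⟩ := hG.exists_sign_eq_neg_one
  have hplus := sum_mul_add_mul_sqrtEdgeSum_nonneg G hK ha' (σ := 1) (fun _ => one_pow 2)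
    (fun _ _ _ => one_mul 1)
  have hminus := sum_mul_add_mul_sqrtEdgeSum_nonneg G hK ha' hσ hσadj
  rcases abs_choice b with h | h <;> rw [h] <;> linarith

lemma pos_of_forall_trace_pos
    (hD : ∀ a b, (treeMat G a b).PosSemidef → treeMat G a b ≠ 0 →
      0 < (treeMat G a b * treeMat G a' b').trace) (i : Fin p) :
    0 < a' i := by
  have hdiag : treeMat G (Pi.single i 1) 0 = diagonal (Pi.single i (1 : ℝ)) := by
    rw [treeMat_eq, zero_smul, add_zero]
  have hpsd : (treeMat G (Pi.single i 1) 0).PosSemidef := by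
    rw [hdiag, posSemidef_diagonal_iff]
    intro j
    rw [Pi.single_apply]
    split_ifs <;> norm_num
  have hne : treeMat G (Pi.single i 1) 0 ≠ 0 := fun h => by
    simpa [hdiag] using congrFun (congrFun h i) i
  simpa [trace_treeMat_mul_treeMat, Pi.single_apply] using hD _ _ hpsd hne

lemma two_mul_card_mul_abs_lt_sqrtEdgeSum {i j : Fin p} (hij : G.Adj i j)
    (ha' : ∀ i, 0 < a' i)
    (hD : ∀ a b, (treeMat G a b).PosSemidef → treeMat G a b ≠ 0 →
      0 < (treeMat G a b * treeMat G a' b').trace) :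
    2 * #G.edgeFinset * |b'| < sqrtEdgeSum G a' := by
  obtain ⟨ε, hε, hεb⟩ : ∃ ε : ℝ, |ε| = 1 ∧ ε * b' = -|b'| := by
    rcases abs_choice b' with h | h
    · exact ⟨-1, by norm_num, by rw [h]; ring⟩
    · exact ⟨1, by norm_num, by rw [h]; ring⟩
  have hpsd := posSemidef_dualWitness G (fun i => Real.sqrt_pos.mpr (ha' i)) hε.le
  have hne : dualWitness G (fun i => √(a' i)) ε ≠ 0 := fun h => by
    have hεij := congrFun (congrFun h i) j
    simp only [dualWitness, treeMat, of_apply, hij.ne, hij, if_false, if_true,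
      Matrix.zero_apply] at hεij
    simp [hεij] at hε
  have htr : 0 < (dualWitness G (fun i => √(a' i)) ε * treeMat G a' b').trace := hD _ _ hpsd hne
  rw [trace_dualWitness_mul_treeMat G ha', hεb] at htr
  linarith

lemma trace_pos_of_posSemidef (hG : G.Colorable 2) (ha' : ∀ i, 0 < a' i)
    (hb' : 2 * #G.edgeFinset * |b'| < sqrtEdgeSum G a') {a : Fin p → ℝ} {b : ℝ}
    (hK : (treeMat G a b).PosSemidef) (hne : treeMat G a b ≠ 0) :
    0 < (treeMat G a b * treeMat G a' b').trace := by
  rw [trace_treeMat_mul_treeMat]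
  rcases eq_or_ne b 0 with rfl | hb
  · have ha : ∀ i, 0 ≤ a i := fun i => by simpa [treeMat] using hK.diag_nonneg (i := i)
    obtain ⟨i, hi⟩ : ∃ i, a i ≠ 0 := by
      by_contra! h
      exact hne (by simp [treeMat_eq, funext h])
    rw [zero_mul, mul_zero, add_zero]
    exact sum_pos' (fun j _ => mul_nonneg (ha j) (ha' j).le)
      ⟨i, mem_univ i, mul_pos ((ha i).lt_of_ne' hi) (ha' i)⟩
  · have hsum := abs_mul_sqrtEdgeSum_le hG hK fun i => (ha' i).le
    have hS := mul_lt_mul_of_pos_left hb' (abs_pos.mpr hb)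
    have hcross : -(|b| * |b'|) ≤ b * b' := by
      rw [← abs_mul]
      exact neg_abs_le _
    nlinarith [mul_le_mul_of_nonneg_left hcross (by positivity : (0 : ℝ) ≤ 2 * #G.edgeFinset)]

end DualCone

theorem dual_cone_tree (p : ℕ) (hp : 2 ≤ p) (G : SimpleGraph (Fin p))
    [DecidableRel G.Adj] (hG : G.IsTree) :
    {D : Matrix (Fin p) (Fin p) ℝ | (∃ a' b', D = treeMat G a' b') ∧
        ∀ K ∈ closure {K : Matrix (Fin p) (Fin p) ℝ |
            (∃ a b, K = treeMat G a b) ∧ K.PosDef},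
          K ≠ 0 → 0 < (K * D).trace}
      = {D : Matrix (Fin p) (Fin p) ℝ | ∃ a' b', D = treeMat G a' b' ∧
          (∀ i, 0 < a' i) ∧
          |b'| < (1 / (p - 1 : ℝ)) *
            ((1/2 : ℝ) * ∑ i, ∑ j,
              if G.Adj i j then Real.sqrt (a' i * a' j) else 0)} := by
  have hcard : (#G.edgeFinset : ℝ) = p - 1 := by
    rw [eq_sub_iff_add_eq]
    exact_mod_cast (Fintype.card_fin p ▸ hG.card_edgeFinset)
  have hp1 : (0 : ℝ) < p - 1 := by
    have : (2 : ℝ) ≤ p := by exact_mod_cast hp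
    linarith
  have hbound : ∀ (a' : Fin p → ℝ) (b' : ℝ),
      |b'| < 1 / (p - 1 : ℝ) * (1 / 2 * sqrtEdgeSum G a')
        ↔ 2 * #G.edgeFinset * |b'| < sqrtEdgeSum G a' := fun a' b' => by
    rw [hcard, one_div, ← div_eq_inv_mul, lt_div_iff₀ hp1]
    constructor <;> intro h <;> linarith
  have : Nontrivial (Fin p) := Fin.nontrivial_iff_two_le.mpr hp
  obtain ⟨j, hij⟩ := hG.connected.preconnected.exists_adj_of_nontrivial ⟨0, by omega⟩
  rw [closure_setOf_treeMat_posDef]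
  ext D
  constructor
  · rintro ⟨⟨a', b', rfl⟩, hD⟩
    have hD' := fun a b hK => hD (treeMat G a b) ⟨⟨a, b, rfl⟩, hK⟩
    have ha' := pos_of_forall_trace_pos hD'
    exact ⟨a', b', rfl, ha', (hbound a' b').2 (two_mul_card_mul_abs_lt_sqrtEdgeSum hij ha' hD')⟩
  · rintro ⟨a', b', rfl, ha', hb'⟩
    refine ⟨⟨a', b', rfl⟩, ?_⟩
    rintro _ ⟨⟨a, b, rfl⟩, hK⟩ hne
    exact trace_pos_of_posSemidef hG.colorable_two ha' ((hbound a' b').1 hb') hK hne
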